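/- arXiv:1407.8438 — 5 statements merged into one kernel-verified Lean document; each statement's English description precedes it below -/
import Mathlib

section
/- Fix α₀ ∈ (0, π) and d > 0. Consider a Euclidean triangle with vertices x̄, ȳ, z̄, sides d(x̄,ȳ) = a + d and d(x̄,z̄) = b + d, and angle α at x̄ with α₀ ≤ α < π. Let ū ∈ [x̄,ȳ] with d(ū,ȳ) = a and v̄ ∈ [x̄,z̄] with d(v̄,z̄) = b. Then for all a, b sufficiently large, d(ū,v̄) < d(ȳ,z̄) - d·sin²(α₀/2). -/
/-!
Since `u` and `v` both lie at distance `d` from `x`, `d(u,v) ≤ 2d`. Writing the law of cosines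
with `cos θ = 1 - 2 sin²(θ/2)` gives `d(y,z)² = (p - q)² + 4pq sin²(θ/2)` for `p = d(x,y)`,
`q = d(x,z)`, so `d(y,z) ≥ 2 (N + d) sin(α₀/2)` once `a, b ≥ N`. With `s = sin(α₀/2) > 0` and
`N = d / s` this is `2d + 2ds`, which beats `2d + ds²` because `s < 2`.
-/

open Real EuclideanGeometry

namespace EuclideanGeometry

variable {V P : Type*} [NormedAddCommGroup V] [InnerProductSpace ℝ V] [MetricSpace P]
  [NormedAddTorsor V P]

theorem dist_sq_eq_sq_sub_add_sin_half_angle_sq (x y z : P) :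
    dist y z ^ 2 =
      (dist x y - dist x z) ^ 2 + 4 * dist x y * dist x z * sin (∠ y x z / 2) ^ 2 := by
  have hcos : cos (∠ y x z) = 1 - 2 * sin (∠ y x z / 2) ^ 2 := by
    rw [← cos_two_mul_eq_one_sub, mul_div_cancel₀ _ two_ne_zero]
  have := law_cos y x z
  rw [dist_comm y x, dist_comm z x, hcos] at this
  linear_combination this

theorem two_mul_mul_sin_half_angle_le_dist {x y z : P} {m : ℝ} (hm : 0 ≤ m)
    (hy : m ≤ dist x y) (hz : m ≤ dist x z) :
    2 * m * sin (∠ y x z / 2) ≤ dist y z := by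
  have hsq : (2 * m * sin (∠ y x z / 2)) ^ 2 ≤ dist y z ^ 2 := by
    rw [dist_sq_eq_sq_sub_add_sin_half_angle_sq x]
    have : m * m ≤ dist x y * dist x z := mul_le_mul hy hz hm (hm.trans hy)
    nlinarith [sq_nonneg (dist x y - dist x z), sq_nonneg (sin (∠ y x z / 2))]
  exact le_of_sq_le_sq hsq dist_nonneg

end EuclideanGeometry

theorem Real.sin_half_le_sin_half {α θ : ℝ} (hα : 0 ≤ α) (hαθ : α ≤ θ) (hθ : θ ≤ π) :
    sin (α / 2) ≤ sin (θ / 2) :=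
  sin_le_sin_of_le_of_le_pi_div_two (by linarith [pi_pos]) (by linarith) (by linarith)

/-- Quantitative gap estimate: in a Euclidean triangle with `d(x,y) = a + d`,
`d(x,z) = b + d` and angle at `x` in `[α₀, π)`, if `u ∈ [x,y]` with `d(u,y) = a`
and `v ∈ [x,z]` with `d(v,z) = b`, then for all `a, b` large enough
`d(u,v) < d(y,z) - d·sin²(α₀/2)`. -/
theorem euclidean_gap_estimate
    (α₀ d : ℝ) (hα₀ : α₀ ∈ Set.Ioo 0 Real.pi) (hd : 0 < d) :
    ∃ N : ℝ, ∀ (x y z u v : EuclideanSpace ℝ (Fin 2)) (a b : ℝ),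
      N ≤ a → N ≤ b →
      dist x y = a + d → dist x z = b + d →
      α₀ ≤ EuclideanGeometry.angle y x z → EuclideanGeometry.angle y x z < Real.pi →
      dist x u + dist u y = dist x y → dist u y = a →
      dist x v + dist v z = dist x z → dist v z = b →
      dist u v < dist y z - d * Real.sin (α₀ / 2) ^ 2 := by
  set s := sin (α₀ / 2)
  have hs : 0 < s := sin_pos_of_pos_of_lt_pi (by linarith [hα₀.1]) (by linarith [hα₀.2, pi_pos])
  have hs1 : s ≤ 1 := sin_le_one _
  refine ⟨d / s, fun x y z u v a b ha hb hxy hxz hα _ hu huy hv hvz => ?_⟩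
  have huv : dist u v ≤ 2 * d := by
    have := dist_triangle_left u v x
    linarith
  have hyz : 2 * (d / s + d) * s ≤ dist y z :=
    calc 2 * (d / s + d) * s ≤ 2 * (d / s + d) * sin (∠ y x z / 2) := by
          gcongr; exact sin_half_le_sin_half hα₀.1.le hα (angle_le_pi y x z)
      _ ≤ dist y z := two_mul_mul_sin_half_angle_le_dist (by positivity) (by linarith)
          (by linarith)
  have hds : d / s * s = d := div_mul_cancel₀ d hs.ne'
  nlinarith [mul_pos (mul_pos hd hs) (by linarith : 0 < 2 - s)]
end

section
/- For h, ε > 0, in a hyperbolic triangle in H² with d(x̄,ȳ) = h, d(x̄,z̄) = h + ε, and angle at ȳ at least π/2, one has d(ȳ,z̄) ≤ arccosh(e^ε + e^{-ε-2h}). -/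
/-!
Since the angle at `ȳ` is obtuse, the law of cosines gives
`cosh h * cosh c ≤ cosh (h + ε)`. Expanding in exponentials,
`(e^ε + e^{-ε-2h}) * cosh h = cosh (h + ε) + (e^{ε-h} + e^{-ε-3h}) / 2`,
so `cosh c ≤ e^ε + e^{-ε-2h}`, and `arcosh` is monotone.
-/

noncomputable def arcosh (x : ℝ) : ℝ := Real.log (x + Real.sqrt (x ^ 2 - 1))

section

open Real hiding arcosh

theorem arcosh_eq_real_arcosh : arcosh = Real.arcosh := rfl

theorem le_arcosh_of_cosh_le {c x : ℝ} (hc : 0 ≤ c) (hx : cosh c ≤ x) : c ≤ arcosh x := by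
  have hx₀ : 0 < x := (cosh_pos c).trans_le hx
  rw [arcosh_eq_real_arcosh, ← Real.arcosh_cosh hc]
  exact (Real.arcosh_le_arcosh (cosh_pos c) hx₀).2 hx

theorem cosh_mul_cosh_le_of_law_of_cosines {a b c γ : ℝ} (ha : 0 ≤ a) (hb : 0 ≤ b)
    (hγ₁ : π / 2 ≤ γ) (hγ₂ : γ ≤ π)
    (hlaw : cosh c = cosh a * cosh b - sinh a * sinh b * cos γ) :
    cosh a * cosh b ≤ cosh c := by
  have hcos : cos γ ≤ 0 := cos_nonpos_of_pi_div_two_le_of_le hγ₁ (by linarith [pi_pos])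
  have hsinh : 0 ≤ sinh a * sinh b :=
    mul_nonneg (sinh_nonneg_iff.mpr ha) (sinh_nonneg_iff.mpr hb)
  nlinarith [mul_nonpos_of_nonneg_of_nonpos hsinh hcos]

theorem exp_add_exp_mul_cosh (h ε : ℝ) :
    (exp ε + exp (-ε - 2 * h)) * cosh h
      = cosh (h + ε) + (exp (ε - h) + exp (-ε - 3 * h)) / 2 := by
  simp only [cosh_eq, add_mul, mul_add, mul_div_assoc', ← exp_add]
  ring_nf

theorem cosh_add_le_exp_add_exp_mul_cosh (h ε : ℝ) :
    cosh (h + ε) ≤ (exp ε + exp (-ε - 2 * h)) * cosh h := by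
  rw [exp_add_exp_mul_cosh]
  linarith [exp_pos (ε - h), exp_pos (-ε - 3 * h)]

end

theorem hyperbolic_right_angle_arcosh_estimate_general
    (h ε c γ : ℝ) (hh : 0 < h) (hc : 0 ≤ c)
    (hγ₁ : Real.pi / 2 ≤ γ) (hγ₂ : γ ≤ Real.pi)
    (hlaw : Real.cosh (h + ε) =
      Real.cosh h * Real.cosh c - Real.sinh h * Real.sinh c * Real.cos γ) :
    c ≤ arcosh (Real.exp ε + Real.exp (-ε - 2 * h)) := by
  have hobtuse := cosh_mul_cosh_le_of_law_of_cosines hh.le hc hγ₁ hγ₂ hlaw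
  have hcosh : Real.cosh h * Real.cosh c
      ≤ Real.cosh h * (Real.exp ε + Real.exp (-ε - 2 * h)) := by
    linarith [cosh_add_le_exp_add_exp_mul_cosh h ε]
  exact le_arcosh_of_cosh_le hc (le_of_mul_le_mul_left hcosh (Real.cosh_pos h))

/-- For a hyperbolic triangle in `ℍ²` with `d(x,y) = h`, `d(x,z) = h + ε`,
`d(y,z) = c` and angle `γ ≥ π/2` at `y` (satisfying the hyperbolic law of
cosines), one has `c ≤ arccosh(e^ε + e^{-ε-2h})`. -/
theorem hyperbolic_right_angle_arcosh_estimate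
    (h ε c γ : ℝ) (hh : 0 < h) (hε : 0 < ε) (hc : 0 ≤ c)
    (hγ₁ : Real.pi / 2 ≤ γ) (hγ₂ : γ ≤ Real.pi)
    (hlaw : Real.cosh (h + ε) =
      Real.cosh h * Real.cosh c - Real.sinh h * Real.sinh c * Real.cos γ) :
    c ≤ arcosh (Real.exp ε + Real.exp (-ε - 2 * h)) :=
  hyperbolic_right_angle_arcosh_estimate_general h ε c γ hh hc hγ₁ hγ₂ hlaw
end

section
/- Let X be a CAT(-1) space and (Δ(xₙ,yₙ,zₙ)) a sequence of geodesic triangles in X such that the Alexandrov angle at yₙ between xₙ and zₙ is at least π/2 for all n, d(xₙ,yₙ) → ∞, and d(xₙ,zₙ) - d(xₙ,yₙ) → 0. Then d(yₙ,zₙ) → 0. -/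
/-- `p` lies on a geodesic segment between `x` and `y`. -/
def MetricBtw {X : Type*} [MetricSpace X] (x p y : X) : Prop :=
  dist x p + dist p y = dist x y

/-- `X` is a geodesic metric space: any two points are joined by a segment,
realized pointwise at every ratio `t ∈ [0,1]`. -/
def IsGeodesicSpace (X : Type*) [MetricSpace X] : Prop :=
  ∀ x y : X, ∀ t : ℝ, t ∈ Set.Icc (0 : ℝ) 1 →
    ∃ p : X, dist x p = t * dist x y ∧ MetricBtw x p y

/-- A subset is (geodesically) convex. -/
def MetricConvex {X : Type*} [MetricSpace X] (K : Set X) : Prop :=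
  ∀ x ∈ K, ∀ y ∈ K, ∀ p : X, MetricBtw x p y → p ∈ K

/-- The CAT(-1) comparison inequality: distances between points on the sides of a
triangle are bounded by the corresponding distances in a comparison triangle in the
hyperbolic plane `ℍ²` (the upper half-plane with its hyperbolic metric). -/
def IsCatMinusOne (X : Type*) [MetricSpace X] : Prop :=
  ∀ x y z p q : X, MetricBtw x p y → MetricBtw x q z →
    ∀ x' y' z' p' q' : UpperHalfPlane,
      dist x' y' = dist x y → dist x' z' = dist x z → dist y' z' = dist y z →
      MetricBtw x' p' y' → dist x' p' = dist x p →
      MetricBtw x' q' z' → dist x' q' = dist x q →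
      dist p q ≤ dist p' q'

/-- The CAT(0) comparison inequality (comparison triangles in the Euclidean plane). -/
def IsCatZero (X : Type*) [MetricSpace X] : Prop :=
  ∀ x y z p q : X, MetricBtw x p y → MetricBtw x q z →
    ∀ x' y' z' p' q' : EuclideanSpace ℝ (Fin 2),
      dist x' y' = dist x y → dist x' z' = dist x z → dist y' z' = dist y z →
      MetricBtw x' p' y' → dist x' p' = dist x p →
      MetricBtw x' q' z' → dist x' q' = dist x q →
      dist p q ≤ dist p' q'

/-- The CAT(κ) comparison inequality for `κ < 0`: the model space `M²_κ` is the
hyperbolic plane with distance multiplied by `1/√(-κ)`, so comparison triangles in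
`ℍ²` have side lengths `√(-κ)` times those in `X`. -/
def IsCatNeg (κ : ℝ) (X : Type*) [MetricSpace X] : Prop :=
  ∀ x y z p q : X, MetricBtw x p y → MetricBtw x q z →
    ∀ x' y' z' p' q' : UpperHalfPlane,
      dist x' y' = Real.sqrt (-κ) * dist x y →
      dist x' z' = Real.sqrt (-κ) * dist x z →
      dist y' z' = Real.sqrt (-κ) * dist y z →
      MetricBtw x' p' y' → dist x' p' = Real.sqrt (-κ) * dist x p →
      MetricBtw x' q' z' → dist x' q' = Real.sqrt (-κ) * dist x q →
      Real.sqrt (-κ) * dist p q ≤ dist p' q'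

/-- The CAT(κ) condition for `κ ≤ 0`. -/
def IsCatK (κ : ℝ) (X : Type*) [MetricSpace X] : Prop :=
  if κ < 0 then IsCatNeg κ X else IsCatZero X

/-- Euclidean comparison angle determined by the three side lengths. -/
noncomputable def compAngle (a b c : ℝ) : ℝ :=
  Real.arccos ((a ^ 2 + b ^ 2 - c ^ 2) / (2 * a * b))

/-- The Alexandrov angle at `x` between `y` and `z`, defined (as is valid in CAT(0)
spaces) as the infimum of Euclidean comparison angles over points on the segments. -/
noncomputable def alexAngle {X : Type*} [MetricSpace X] (x y z : X) : ℝ :=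
  sInf {θ : ℝ | ∃ p q : X, MetricBtw x p y ∧ MetricBtw x q z ∧ p ≠ x ∧ q ≠ x ∧
    θ = compAngle (dist x p) (dist x q) (dist p q)}

/-- `K` is geodesically bounded: it contains no geodesic ray. -/
def GeodesicallyBounded {X : Type*} [MetricSpace X] (K : Set X) : Prop :=
  ¬ ∃ c : ℝ → X, (∀ s t : ℝ, 0 ≤ s → 0 ≤ t → dist (c s) (c t) = |s - t|) ∧
      ∀ t : ℝ, 0 ≤ t → c t ∈ K

/-!
An angle of at least `π/2` at `y` forces the hyperbolic Pythagorean inequality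
`cosh d(x,y) · cosh d(y,z) ≤ cosh d(x,z)`. Indeed, let `θ` be the angle at `I` of the comparison
triangle in `ℍ²`; comparing the points at distance `s` from `y` on the two sides with their
comparison points gives `s² ≤ (1 - cos θ) sinh² s`, and letting `s → 0` gives `cos θ ≤ 0`.
Hence `cosh d(y,z) ≤ cosh d(x,z) / cosh d(x,y) ≤ exp |d(x,z) - d(x,y)| → 1`.
-/

open Real Filter Topology

theorem sinh_mul_cos_lt_cosh (u θ : ℝ) : sinh u * cos θ < cosh u := by
  have := sinh_lt_cosh u
  have := sinh_lt_cosh (-u)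
  rw [sinh_neg, cosh_neg] at this
  rcases le_total 0 (sinh u) with h | h <;> nlinarith [neg_one_le_cos θ, cos_le_one θ]

namespace UpperHalfPlane

/-- The point at distance `u` from `I` on the geodesic leaving `I` in direction `θ`
(`θ = 0` is the upward vertical ray, `θ = π` the downward one). -/
noncomputable def rayPoint (θ u : ℝ) : ℍ :=
  ⟨⟨sinh u * sin θ / (cosh u - sinh u * cos θ), 1 / (cosh u - sinh u * cos θ)⟩,
    one_div_pos.2 (sub_pos.2 (sinh_mul_cos_lt_cosh u θ))⟩

theorem cosh_dist_rayPoint (θ φ u v : ℝ) :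
    cosh (dist (rayPoint θ u) (rayPoint φ v)) =
      cosh u * cosh v - sinh u * sinh v * cos (θ - φ) := by
  have hD₁ := (sub_pos.2 (sinh_mul_cos_lt_cosh u θ)).ne'
  have hD₂ := (sub_pos.2 (sinh_mul_cos_lt_cosh v φ)).ne'
  rw [cosh_dist, Complex.dist_eq_re_im, sq_sqrt (by positivity), cos_sub]
  simp only [rayPoint, UpperHalfPlane.im]
  field_simp
  linear_combination (-(cosh v - sinh v * cos φ) ^ 2) * cosh_sq u
    + ((cosh v - sinh v * cos φ) * sinh u) ^ 2 * sin_sq_add_cos_sq θ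
    - (cosh u - sinh u * cos θ) ^ 2 * cosh_sq v
    + ((cosh u - sinh u * cos θ) * sinh v) ^ 2 * sin_sq_add_cos_sq φ

theorem rayPoint_zero (θ : ℝ) : rayPoint θ 0 = I := by
  ext
  simp [rayPoint, Complex.ext_iff]

theorem dist_rayPoint_rayPoint (θ u v : ℝ) : dist (rayPoint θ u) (rayPoint θ v) = |u - v| := by
  refine cosh_injOn dist_nonneg (abs_nonneg (u - v)) ?_
  rw [cosh_dist_rayPoint, sub_self, cos_zero, mul_one, cosh_abs, cosh_sub]

theorem dist_I_rayPoint (θ : ℝ) {u : ℝ} (hu : 0 ≤ u) : dist I (rayPoint θ u) = u := by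
  rw [← rayPoint_zero θ, dist_rayPoint_rayPoint, zero_sub, abs_neg, abs_of_nonneg hu]

theorem metricBtw_I_rayPoint (θ : ℝ) {u v : ℝ} (hu : 0 ≤ u) (huv : u ≤ v) :
    MetricBtw I (rayPoint θ u) (rayPoint θ v) := by
  rw [MetricBtw, dist_I_rayPoint θ hu, dist_I_rayPoint θ (hu.trans huv),
    dist_rayPoint_rayPoint, abs_of_nonpos (sub_nonpos.2 huv)]
  ring

theorem dist_rayPoint_eq_of_cosh_eq {θ a b c : ℝ} (hc : 0 ≤ c)
    (h : cosh c = cosh a * cosh b - sinh a * sinh b * cos θ) :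
    dist (rayPoint 0 a) (rayPoint θ b) = c :=
  cosh_injOn dist_nonneg hc (by rw [cosh_dist_rayPoint, zero_sub, cos_neg, h])

end UpperHalfPlane

theorem one_add_sq_div_two_le_cosh (x : ℝ) : 1 + x ^ 2 / 2 ≤ cosh x := by
  have := sum_le_hasSum (Finset.range 2)
    (fun n _ => div_nonneg (pow_mul x 2 n ▸ pow_nonneg (sq_nonneg x) n) (by positivity))
    (hasSum_cosh x)
  simpa [Finset.sum_range_succ] using this

theorem cosh_le_exp_abs_sub_mul_cosh (a c : ℝ) : cosh c ≤ exp |c - a| * cosh a := by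
  have h₁ : exp c ≤ exp |c - a| * exp a := by
    rw [← exp_add]; exact exp_le_exp.2 (by linarith [le_abs_self (c - a)])
  have h₂ : exp (-c) ≤ exp |c - a| * exp (-a) := by
    rw [← exp_add]; exact exp_le_exp.2 (by linarith [neg_abs_le (c - a)])
  rw [cosh_eq, cosh_eq]
  linarith

theorem exists_cosh_eq_cosh_mul_cosh_sub {a b c : ℝ} (ha : 0 < a) (hb : 0 < b)
    (hc : c ≤ a + b) (hc' : |a - b| ≤ c) :
    ∃ θ, cosh c = cosh a * cosh b - sinh a * sinh b * cos θ := by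
  have hab : 0 < sinh a * sinh b := mul_pos (sinh_pos_iff.2 ha) (sinh_pos_iff.2 hb)
  have hc₀ : 0 ≤ c := (abs_nonneg _).trans hc'
  have hle : cosh c ≤ cosh (a + b) := cosh_le_cosh.2 (by rwa [abs_of_nonneg hc₀,
    abs_of_nonneg (by positivity)])
  have hge : cosh (a - b) ≤ cosh c := cosh_le_cosh.2 (by rwa [abs_of_nonneg hc₀])
  rw [cosh_add] at hle
  rw [cosh_sub] at hge
  refine ⟨arccos ((cosh a * cosh b - cosh c) / (sinh a * sinh b)), ?_⟩
  rw [cos_arccos (by rw [le_div_iff₀ hab]; linarith) (by rw [div_le_iff₀ hab]; linarith)]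
  field_simp
  ring

theorem nonpos_of_eventually_sq_le_mul_sinh_sq {k : ℝ}
    (h : ∀ᶠ s in 𝓝[>] 0, s ^ 2 ≤ (1 - k) * sinh s ^ 2) : k ≤ 0 := by
  have hslope : Tendsto (fun s => sinh s / s) (𝓝[>] 0) (𝓝 1) := by
    simpa [div_eq_inv_mul] using (hasDerivAt_sinh 0).tendsto_slope_zero_right
  have hlim : Tendsto (fun s => (1 - k) * (sinh s / s) ^ 2) (𝓝[>] 0) (𝓝 (1 - k)) := by
    simpa using (hslope.pow 2).const_mul (1 - k)
  have : 1 ≤ 1 - k := ge_of_tendsto hlim (by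
    filter_upwards [h, self_mem_nhdsWithin] with s hs (hs₀ : 0 < s)
    rw [div_pow, mul_div_assoc', le_div_iff₀ (by positivity), one_mul]
    exact hs)
  linarith

theorem tendsto_zero_of_tendsto_cosh_one {ι : Type*} {l : Filter ι} {f : ι → ℝ}
    (hf : ∀ i, 0 ≤ f i) (h : Tendsto (fun i => cosh (f i)) l (𝓝 1)) : Tendsto f l (𝓝 0) := by
  have h' : Tendsto (fun i => cosh (f i)) l (𝓝[Set.Ici 1] 1) :=
    tendsto_nhdsWithin_iff.2 ⟨h, Eventually.of_forall fun i => one_le_cosh (f i)⟩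
  have := ((continuousOn_arcosh 1 Set.self_mem_Ici).tendsto.comp h')
  simpa [Function.comp_def, arcosh_cosh (hf _)] using this

section Metric

variable {X : Type*} [MetricSpace X]

theorem pi_div_two_le_compAngle_iff {a b c : ℝ} (ha : 0 < a) (hb : 0 < b) :
    π / 2 ≤ compAngle a b c ↔ a ^ 2 + b ^ 2 ≤ c ^ 2 := by
  rw [compAngle, ← not_lt, arccos_lt_pi_div_two, not_lt, div_le_iff₀ (by positivity), zero_mul,
    sub_nonpos]

theorem alexAngle_le_compAngle {x y z p q : X} (hp : MetricBtw x p y) (hq : MetricBtw x q z)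
    (hpx : p ≠ x) (hqx : q ≠ x) :
    alexAngle x y z ≤ compAngle (dist x p) (dist x q) (dist p q) :=
  csInf_le ⟨0, by rintro _ ⟨_, _, _, _, _, _, rfl⟩; exact arccos_nonneg _⟩
    ⟨p, q, hp, hq, hpx, hqx, rfl⟩

theorem sq_add_sq_le_dist_sq_of_pi_div_two_le_alexAngle {x y z p q : X}
    (hang : π / 2 ≤ alexAngle x y z) (hp : MetricBtw x p y) (hq : MetricBtw x q z)
    (hpx : p ≠ x) (hqx : q ≠ x) : dist x p ^ 2 + dist x q ^ 2 ≤ dist p q ^ 2 :=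
  (pi_div_two_le_compAngle_iff (dist_pos.2 hpx.symm) (dist_pos.2 hqx.symm)).1
    (hang.trans (alexAngle_le_compAngle hp hq hpx hqx))

theorem IsGeodesicSpace.exists_metricBtw_dist_eq (hgeo : IsGeodesicSpace X) (x y : X) {s : ℝ}
    (hs : 0 ≤ s) (hsd : s ≤ dist x y) : ∃ p, MetricBtw x p y ∧ dist x p = s := by
  obtain ⟨p, hp, hbtw⟩ :=
    hgeo x y (s / dist x y) ⟨div_nonneg hs dist_nonneg, div_le_one_of_le₀ hsd dist_nonneg⟩
  exact ⟨p, hbtw, by rw [hp, div_mul_cancel_of_imp fun h => le_antisymm (h ▸ hsd) hs]⟩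

end Metric

namespace IsCatMinusOne

open UpperHalfPlane

variable {X : Type*} [MetricSpace X]

/-- The points at distance `s` from `y` on `[y, x]` and `[y, z]` are at least `√2 s` apart
because of the angle at `y`, and at most as far apart as their images on the comparison
triangle with angle `θ` at `I`. -/
theorem sq_le_one_sub_cos_mul_sinh_sq (hcat : IsCatMinusOne X) (hgeo : IsGeodesicSpace X)
    {x y z : X} (hang : π / 2 ≤ alexAngle y x z) {θ : ℝ}
    (hθ : cosh (dist x z) =
      cosh (dist y x) * cosh (dist y z) - sinh (dist y x) * sinh (dist y z) * cos θ)
    {s : ℝ} (hs : 0 < s) (hsx : s ≤ dist y x) (hsz : s ≤ dist y z) :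
    s ^ 2 ≤ (1 - cos θ) * sinh s ^ 2 := by
  obtain ⟨p, hp, hyp⟩ := hgeo.exists_metricBtw_dist_eq y x hs.le hsx
  obtain ⟨q, hq, hyq⟩ := hgeo.exists_metricBtw_dist_eq y z hs.le hsz
  have hpq : 2 * s ^ 2 ≤ dist p q ^ 2 := by
    have hne : ∀ w : X, dist y w = s → w ≠ y := fun w hw h => by
      rw [h, dist_self] at hw; exact hs.ne hw
    have := sq_add_sq_le_dist_sq_of_pi_div_two_le_alexAngle hang hp hq (hne p hyp) (hne q hyq)
    rwa [hyp, hyq, ← two_mul] at this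
  have hcomp : dist p q ≤ dist (rayPoint 0 s) (rayPoint θ s) :=
    hcat y x z p q hp hq I (rayPoint 0 (dist y x)) (rayPoint θ (dist y z))
      (rayPoint 0 s) (rayPoint θ s) (dist_I_rayPoint 0 dist_nonneg)
      (dist_I_rayPoint θ dist_nonneg) (dist_rayPoint_eq_of_cosh_eq dist_nonneg hθ)
      (metricBtw_I_rayPoint 0 hs.le hsx) (by rw [dist_I_rayPoint 0 hs.le, hyp])
      (metricBtw_I_rayPoint θ hs.le hsz) (by rw [dist_I_rayPoint θ hs.le, hyq])
  calc s ^ 2 ≤ cosh (dist p q) - 1 := by linarith [one_add_sq_div_two_le_cosh (dist p q)]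
    _ ≤ cosh (dist (rayPoint 0 s) (rayPoint θ s)) - 1 := by
      gcongr
      rwa [cosh_le_cosh, abs_of_nonneg dist_nonneg, abs_of_nonneg dist_nonneg]
    _ = (1 - cos θ) * sinh s ^ 2 := by
      rw [cosh_dist_rayPoint, zero_sub, cos_neg]
      linear_combination cosh_sq s

theorem cosh_mul_cosh_le_cosh (hcat : IsCatMinusOne X) (hgeo : IsGeodesicSpace X) {x y z : X}
    (hang : π / 2 ≤ alexAngle y x z) :
    cosh (dist y x) * cosh (dist y z) ≤ cosh (dist x z) := by
  rcases eq_or_ne x y with rfl | hxy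
  · simp
  rcases eq_or_ne z y with rfl | hzy
  · simp [dist_comm]
  have ha := dist_pos.2 hxy.symm
  have hb := dist_pos.2 hzy.symm
  obtain ⟨θ, hθ⟩ := exists_cosh_eq_cosh_mul_cosh_sub ha hb
    (by simpa only [dist_comm y] using dist_triangle x y z)
    (by simpa only [dist_comm y] using abs_dist_sub_le x z y)
  have hcos : cos θ ≤ 0 := nonpos_of_eventually_sq_le_mul_sinh_sq <| by
    filter_upwards [Ioo_mem_nhdsGT (lt_min ha hb)] with s ⟨hs, hsab⟩
    exact hcat.sq_le_one_sub_cos_mul_sinh_sq hgeo hang hθ hs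
      (hsab.le.trans (min_le_left _ _)) (hsab.le.trans (min_le_right _ _))
  rw [hθ]
  nlinarith [mul_pos (sinh_pos_iff.2 ha) (sinh_pos_iff.2 hb)]

theorem cosh_dist_le_exp_abs_sub (hcat : IsCatMinusOne X) (hgeo : IsGeodesicSpace X)
    {x y z : X} (hang : π / 2 ≤ alexAngle y x z) :
    cosh (dist y z) ≤ exp |dist x z - dist x y| := by
  refine le_of_mul_le_mul_left ?_ (cosh_pos (dist x y))
  calc cosh (dist x y) * cosh (dist y z) ≤ cosh (dist x z) := by
        simpa only [dist_comm y x] using hcat.cosh_mul_cosh_le_cosh hgeo hang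
    _ ≤ exp |dist x z - dist x y| * cosh (dist x y) := cosh_le_exp_abs_sub_mul_cosh _ _
    _ = cosh (dist x y) * exp |dist x z - dist x y| := mul_comm _ _

end IsCatMinusOne

theorem cat_minus_one_shrinking_general {X : Type*} [MetricSpace X]
    (hgeo : IsGeodesicSpace X) (hcat : IsCatMinusOne X)
    (x y z : ℕ → X)
    (hang : ∀ n, Real.pi / 2 ≤ alexAngle (y n) (x n) (z n))
    (h2 : Filter.Tendsto (fun n => dist (x n) (z n) - dist (x n) (y n))
      Filter.atTop (nhds 0)) :
    Filter.Tendsto (fun n => dist (y n) (z n)) Filter.atTop (nhds 0) := by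
  have hexp : Tendsto (fun n => exp |dist (x n) (z n) - dist (x n) (y n)|) atTop (𝓝 1) := by
    simpa [Function.comp_def] using ((continuous_exp.comp continuous_abs).tendsto 0).comp h2
  refine tendsto_zero_of_tendsto_cosh_one (fun n => dist_nonneg) ?_
  exact tendsto_of_tendsto_of_tendsto_of_le_of_le tendsto_const_nhds hexp
    (fun n => one_le_cosh _) (fun n => hcat.cosh_dist_le_exp_abs_sub hgeo (hang n))

/-- In a CAT(-1) space, for a sequence of geodesic triangles `Δ(xₙ, yₙ, zₙ)` with
Alexandrov angle at `yₙ` at least `π/2`, `d(xₙ,yₙ) → ∞` and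
`d(xₙ,zₙ) − d(xₙ,yₙ) → 0`, one has `d(yₙ,zₙ) → 0`. -/
theorem cat_minus_one_shrinking {X : Type*} [MetricSpace X]
    (hgeo : IsGeodesicSpace X) (hcat : IsCatMinusOne X)
    (x y z : ℕ → X)
    (hang : ∀ n, Real.pi / 2 ≤ alexAngle (y n) (x n) (z n))
    (h1 : Filter.Tendsto (fun n => dist (x n) (y n)) Filter.atTop Filter.atTop)
    (h2 : Filter.Tendsto (fun n => dist (x n) (z n) - dist (x n) (y n))
      Filter.atTop (nhds 0)) :
    Filter.Tendsto (fun n => dist (y n) (z n)) Filter.atTop (nhds 0) :=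
  cat_minus_one_shrinking_general hgeo hcat x y z hang h2
end

section
/- Let X be a complete CAT(0) space, K ⊆ X closed convex, T: K → K nonexpansive, and suppose (xₙ) ⊂ K is a bounded sequence with d(xₙ, T xₙ) → 0. Then the asymptotic center of (xₙ) is a fixed point of T. -/
/-!
By the CN inequality `d(z, m)² ≤ ½ d(z, a)² + ½ d(z, b)² - ¼ d(a, b)²` for the midpoint `m` of
`a` and `b`, the asymptotic radius `r(y) = limsup d(y, xₙ)` is strictly convex along geodesics,
so the asymptotic center `a` is the only point with `r(y) ≤ r(a)`. The nearest-point projection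
onto `K` brings `a` closer to every `xₙ`, so it fixes `a`, i.e. `a ∈ K`. Then
`d(Ta, xₙ) ≤ d(a, xₙ) + d(Txₙ, xₙ)` gives `r(Ta) ≤ r(a)`, hence `Ta = a`.
-/

open Filter Topology

lemma EuclideanSpace.dist_fin_two (u v u' v' : ℝ) :
    dist !₂[u, v] !₂[u', v'] = √((u - u') ^ 2 + (v - v') ^ 2) := by
  simp [EuclideanSpace.dist_eq, Fin.sum_univ_two, Real.dist_eq, sq_abs]

lemma exists_comparison_triangle {X : Type*} [MetricSpace X] (b c z : X) :
    ∃ b' c' z' : EuclideanSpace ℝ (Fin 2),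
      dist b' c' = dist b c ∧ dist b' z' = dist b z ∧ dist c' z' = dist c z := by
  have h₁ : dist c z ≤ dist b c + dist b z := by
    simpa [dist_comm b c] using dist_triangle c b z
  have h₂ : dist b z ≤ dist b c + dist c z := dist_triangle b c z
  have h₃ : dist b c ≤ dist b z + dist c z := by
    simpa [dist_comm z c] using dist_triangle b z c
  have n₁ : 0 ≤ dist b c := dist_nonneg
  have n₂ : 0 ≤ dist b z := dist_nonneg
  have n₃ : 0 ≤ dist c z := dist_nonneg
  generalize dist b c = d₁ at *
  generalize dist b z = d₂ at *
  generalize dist c z = d₃ at *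
  rcases n₁.eq_or_lt with rfl | hd₁
  · refine ⟨!₂[0, 0], !₂[0, 0], !₂[d₂, 0], ?_, ?_, ?_⟩ <;>
      simp [EuclideanSpace.dist_fin_two, Real.sqrt_sq_eq_abs, abs_of_nonneg n₂]
    linarith
  -- place `b'` at the origin and `c'` on the first axis; `u` is given by the law of cosines
  set u := (d₁ ^ 2 + d₂ ^ 2 - d₃ ^ 2) / (2 * d₁)
  have hu : 2 * d₁ * u = d₁ ^ 2 + d₂ ^ 2 - d₃ ^ 2 := by
    simp only [u]; field_simp
  have hu₂ : u ^ 2 ≤ d₂ ^ 2 := by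
    have : (2 * d₁ * u) ^ 2 ≤ (2 * d₁ * d₂) ^ 2 := by
      rw [hu]
      nlinarith [mul_nonneg (mul_nonneg (sub_nonneg.2 h₁) (sub_nonneg.2 h₂))
        (mul_nonneg (sub_nonneg.2 h₃) (add_nonneg (add_nonneg hd₁.le n₂) n₃))]
    nlinarith [mul_pos hd₁ hd₁]
  have hv := Real.sq_sqrt (sub_nonneg.2 hu₂)
  refine ⟨!₂[0, 0], !₂[d₁, 0], !₂[u, √(d₂ ^ 2 - u ^ 2)], ?_, ?_, ?_⟩ <;>
    simp only [EuclideanSpace.dist_fin_two]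
  · simp [Real.sqrt_sq_eq_abs, abs_of_pos hd₁]
  · rw [Real.sqrt_eq_iff_eq_sq (by positivity) n₂]; nlinarith
  · rw [Real.sqrt_eq_iff_eq_sq (by positivity) n₃]; nlinarith

lemma dist_sq_lineMap {E : Type*} [NormedAddCommGroup E] [InnerProductSpace ℝ E]
    (b c z : E) (t : ℝ) :
    dist z (AffineMap.lineMap b c t) ^ 2 =
      (1 - t) * dist z b ^ 2 + t * dist z c ^ 2 - t * (1 - t) * dist b c ^ 2 := by
  have h : z - AffineMap.lineMap b c t = (1 - t) • (z - b) + t • (z - c) := by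
    rw [AffineMap.lineMap_apply_module]; module
  have hbc : b - c = (z - c) - (z - b) := by abel
  rw [dist_eq_norm, dist_eq_norm, dist_eq_norm, dist_eq_norm, h, hbc]
  generalize z - b = u, z - c = w
  rw [norm_add_sq_real, norm_sub_sq_real, norm_smul, norm_smul, real_inner_smul_left,
    real_inner_smul_right, real_inner_comm, Real.norm_eq_abs, Real.norm_eq_abs, mul_pow, mul_pow,
    sq_abs, sq_abs]
  ring

lemma metricBtw_lineMap {E : Type*} [NormedAddCommGroup E] [NormedSpace ℝ E]
    (b c : E) {t : ℝ} (ht₀ : 0 ≤ t) (ht₁ : t ≤ 1) :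
    MetricBtw b (AffineMap.lineMap b c t) c := by
  rw [MetricBtw, dist_left_lineMap, dist_lineMap_right, Real.norm_eq_abs, Real.norm_eq_abs,
    abs_of_nonneg ht₀, abs_of_nonneg (sub_nonneg.2 ht₁)]
  ring

lemma metricBtw_right {X : Type*} [MetricSpace X] (x y : X) : MetricBtw x y y := by
  simp [MetricBtw]

/-- The Bruhat–Tits CN inequality. -/
theorem IsCatZero.dist_sq_le {X : Type*} [MetricSpace X] (hcat : IsCatZero X) {b c p : X}
    {t : ℝ} (ht₀ : 0 ≤ t) (ht₁ : t ≤ 1) (hbtw : MetricBtw b p c) (hp : dist b p = t * dist b c)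
    (z : X) :
    dist z p ^ 2 ≤ (1 - t) * dist z b ^ 2 + t * dist z c ^ 2 - t * (1 - t) * dist b c ^ 2 := by
  obtain ⟨b', c', z', hbc, hbz, hcz⟩ := exists_comparison_triangle b c z
  have hp' : dist b' (AffineMap.lineMap b' c' t) = dist b p := by
    rw [dist_left_lineMap, Real.norm_eq_abs, abs_of_nonneg ht₀, hbc, hp]
  have hcomp : dist p z ≤ dist (AffineMap.lineMap b' c' t) z' :=
    hcat b c z p z hbtw (metricBtw_right b z) b' c' z' _ z' hbc hbz hcz
      (metricBtw_lineMap b' c' ht₀ ht₁) hp' (metricBtw_right b' z') hbz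
  calc dist z p ^ 2 ≤ dist z' (AffineMap.lineMap b' c' t) ^ 2 := by
        rw [dist_comm z, dist_comm z']; gcongr
    _ = _ := by rw [dist_sq_lineMap, dist_comm z' b', dist_comm z' c', hbz, hcz, hbc,
      dist_comm b z, dist_comm c z]

section Projection

variable {X : Type*} [MetricSpace X] {K : Set X}

theorem IsCatZero.exists_forall_dist_le [CompleteSpace X] (hgeo : IsGeodesicSpace X)
    (hcat : IsCatZero X) (hcl : IsClosed K) (hconv : MetricConvex K) (hne : K.Nonempty)
    (a : X) : ∃ b ∈ K, ∀ c ∈ K, dist a b ≤ dist a c := by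
  set δ := Metric.infDist a K
  obtain ⟨u, -, -, hu, huK⟩ :=
    (Metric.isGLB_infDist hne).exists_seq_antitone_tendsto (hne.image (dist a))
  choose y hyK hy using huK
  -- the midpoint of `p` and `q` lies in `K`, so it is at distance at least `δ` from `a`
  have hmid : ∀ p ∈ K, ∀ q ∈ K,
      dist p q ^ 2 ≤ 2 * dist a p ^ 2 + 2 * dist a q ^ 2 - 4 * δ ^ 2 := by
    intro p hp q hq
    obtain ⟨m, hm, hbtw⟩ := hgeo p q (1 / 2) ⟨by norm_num, by norm_num⟩
    have hδ : δ ≤ dist a m := Metric.infDist_le_dist_of_mem (hconv p hp q hq m hbtw)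
    have hcn := hcat.dist_sq_le (by norm_num) (by norm_num) hbtw hm a
    nlinarith [Metric.infDist_nonneg (x := a) (s := K)]
  have hbound : Tendsto (fun n : ℕ × ℕ => √(2 * u n.1 ^ 2 + 2 * u n.2 ^ 2 - 4 * δ ^ 2))
      atTop (𝓝 0) := by
    rw [← prod_atTop_atTop_eq]
    have h := (((hu.comp tendsto_fst).pow 2).const_mul 2).add
      (((hu.comp tendsto_snd).pow 2).const_mul 2) |>.sub_const (4 * δ ^ 2) |>.sqrt
    rwa [show (0 : ℝ) = √(2 * δ ^ 2 + 2 * δ ^ 2 - 4 * δ ^ 2) by ring_nf; simp]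
  have hcauchy : CauchySeq y := by
    refine cauchySeq_iff_tendsto_dist_atTop_0.2 <|
      squeeze_zero (fun _ => dist_nonneg) (fun n => ?_) hbound
    exact Real.le_sqrt_of_sq_le (by simpa only [← hy] using hmid _ (hyK n.1) _ (hyK n.2))
  obtain ⟨b, hb⟩ := cauchySeq_tendsto_of_complete hcauchy
  have hab : dist a b = δ :=
    tendsto_nhds_unique (tendsto_const_nhds.dist hb) (by simpa only [hy] using hu)
  exact ⟨b, hcl.mem_of_tendsto hb (.of_forall hyK),
    fun c hc => hab ▸ Metric.infDist_le_dist_of_mem hc⟩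

theorem IsCatZero.dist_sq_add_dist_sq_le (hgeo : IsGeodesicSpace X) (hcat : IsCatZero X)
    (hconv : MetricConvex K) {a b c : X} (hb : b ∈ K) (hmin : ∀ y ∈ K, dist a b ≤ dist a y)
    (hc : c ∈ K) : dist a b ^ 2 + dist b c ^ 2 ≤ dist a c ^ 2 := by
  have key : ∀ t ∈ Set.Ioc (0 : ℝ) 1, dist a b ^ 2 + (1 - t) * dist b c ^ 2 ≤ dist a c ^ 2 := by
    rintro t ⟨ht₀, ht₁⟩
    obtain ⟨p, hp, hbtw⟩ := hgeo b c t ⟨ht₀.le, ht₁⟩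
    have hap : dist a b ^ 2 ≤ dist a p ^ 2 := by
      gcongr; exact hmin p (hconv b hb c hc p hbtw)
    have hcn := hcat.dist_sq_le ht₀.le ht₁ hbtw hp a
    refine le_of_mul_le_mul_left ?_ ht₀
    nlinarith
  have hlim : Tendsto (fun t : ℝ => dist a b ^ 2 + (1 - t) * dist b c ^ 2) (𝓝[>] 0)
      (𝓝 (dist a b ^ 2 + dist b c ^ 2)) := by
    have h : Continuous fun t : ℝ => dist a b ^ 2 + (1 - t) * dist b c ^ 2 := by fun_prop
    simpa using (h.tendsto 0).mono_left nhdsWithin_le_nhds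
  exact le_of_tendsto hlim (mem_of_superset (Ioc_mem_nhdsGT zero_lt_one) key)

end Projection

section AsymptoticCenter

variable {X : Type*} [MetricSpace X] {x : ℕ → X}

/-- The real `limsup` makes this meaningful only for bounded `x`. -/
noncomputable def asymptoticRadius (x : ℕ → X) (y : X) : ℝ :=
  limsup (fun n => dist y (x n)) atTop

def IsAsymptoticCenter (x : ℕ → X) (a : X) : Prop :=
  ∀ y, asymptoticRadius x a ≤ asymptoticRadius x y

lemma isBoundedUnder_dist (hx : Bornology.IsBounded (Set.range x)) (y : X) :
    IsBoundedUnder (· ≤ ·) atTop fun n => dist y (x n) := by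
  obtain ⟨r, hr⟩ := hx.subset_closedBall y
  exact isBoundedUnder_of ⟨r, fun n => dist_comm y (x n) ▸ hr (Set.mem_range_self n)⟩

lemma isCoboundedUnder_dist (y : X) : IsCoboundedUnder (· ≤ ·) atTop fun n => dist y (x n) :=
  isCoboundedUnder_le_of_le atTop fun _ => dist_nonneg

lemma asymptoticRadius_nonneg (hx : Bornology.IsBounded (Set.range x)) (y : X) :
    0 ≤ asymptoticRadius x y :=
  le_limsup_of_frequently_le (.of_forall fun _ => dist_nonneg) (isBoundedUnder_dist hx y)

lemma asymptoticRadius_le_of_eventually_le (hx : Bornology.IsBounded (Set.range x)) {y z : X}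
    (h : ∀ ε > 0, ∀ᶠ n in atTop, dist y (x n) ≤ dist z (x n) + ε) :
    asymptoticRadius x y ≤ asymptoticRadius x z := by
  refine le_of_forall_pos_le_add fun ε hε => ?_
  have hz := isBoundedUnder_dist hx z
  calc asymptoticRadius x y ≤ limsup (fun n => dist z (x n) + ε) atTop :=
        limsup_le_limsup (h ε hε) (isCoboundedUnder_dist y)
          (isBoundedUnder_le_add hz isBoundedUnder_const)
    _ = asymptoticRadius x z + ε := limsup_add_const _ _ ε hz (isCoboundedUnder_dist z)

theorem IsAsymptoticCenter.eq_of_asymptoticRadius_le (hgeo : IsGeodesicSpace X)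
    (hcat : IsCatZero X) (hx : Bornology.IsBounded (Set.range x)) {a b : X}
    (ha : IsAsymptoticCenter x a) (hb : asymptoticRadius x b ≤ asymptoticRadius x a) :
    b = a := by
  set r := asymptoticRadius x a
  have hr : 0 ≤ r := asymptoticRadius_nonneg hx a
  obtain ⟨m, hm, hbtw⟩ := hgeo a b (1 / 2) ⟨by norm_num, by norm_num⟩
  have key : ∀ ε > 0, r ^ 2 + dist a b ^ 2 / 4 ≤ (r + ε) ^ 2 := by
    intro ε hε
    set s := (r + ε) ^ 2 - dist a b ^ 2 / 4
    have hev : ∀ᶠ n in atTop, dist m (x n) ^ 2 ≤ s := by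
      filter_upwards [eventually_lt_of_limsup_lt (lt_add_of_pos_right r hε)
          (isBoundedUnder_dist hx a),
        eventually_lt_of_limsup_lt (hb.trans_lt (lt_add_of_pos_right r hε))
          (isBoundedUnder_dist hx b)] with n hna hnb
      have hcn := hcat.dist_sq_le (by norm_num) (by norm_num) hbtw hm (x n)
      rw [dist_comm (x n), dist_comm (x n), dist_comm (x n)] at hcn
      have := pow_le_pow_left₀ dist_nonneg hna.le 2
      have := pow_le_pow_left₀ dist_nonneg hnb.le 2
      simp only [s]
      linarith
    have hs : 0 ≤ s := let ⟨n, hn⟩ := hev.exists; (sq_nonneg _).trans hn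
    have hrm : r ≤ √s :=
      (ha m).trans (limsup_le_of_le (isCoboundedUnder_dist m)
        (hev.mono fun n hn => Real.le_sqrt_of_sq_le hn))
    have := (Real.le_sqrt hr hs).1 hrm
    simp only [s] at this
    linarith
  have hlim : Tendsto (fun ε : ℝ => (r + ε) ^ 2) (𝓝[>] 0) (𝓝 (r ^ 2)) := by
    have h : Continuous fun ε : ℝ => (r + ε) ^ 2 := by fun_prop
    simpa using (h.tendsto 0).mono_left nhdsWithin_le_nhds
  have hab : r ^ 2 + dist a b ^ 2 / 4 ≤ r ^ 2 :=
    ge_of_tendsto hlim (eventually_mem_nhdsWithin.mono key)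
  exact (dist_le_zero.1 (by nlinarith [dist_nonneg (x := a) (y := b)])).symm

theorem IsAsymptoticCenter.mem_of_forall_mem [CompleteSpace X] (hgeo : IsGeodesicSpace X)
    (hcat : IsCatZero X) (hx : Bornology.IsBounded (Set.range x)) {K : Set X}
    (hcl : IsClosed K) (hconv : MetricConvex K) (hxK : ∀ n, x n ∈ K) {a : X}
    (ha : IsAsymptoticCenter x a) : a ∈ K := by
  obtain ⟨b, hbK, hmin⟩ := hcat.exists_forall_dist_le hgeo hcl hconv ⟨x 0, hxK 0⟩ a
  have hcloser : ∀ n, dist b (x n) ≤ dist a (x n) := fun n =>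
    le_of_sq_le_sq (by nlinarith [hcat.dist_sq_add_dist_sq_le hgeo hconv hbK hmin (hxK n)])
      dist_nonneg
  have hba : b = a := ha.eq_of_asymptoticRadius_le hgeo hcat hx <|
    asymptoticRadius_le_of_eventually_le hx fun ε hε =>
      .of_forall fun n => (hcloser n).trans (le_add_of_nonneg_right hε.le)
  exact hba ▸ hbK

end AsymptoticCenter

theorem asymptotic_center_fixed_general {X : Type*} [MetricSpace X] [CompleteSpace X]
    (hgeo : IsGeodesicSpace X) (hcat : IsCatZero X)
    (K : Set X) (hcl : IsClosed K) (hconv : MetricConvex K)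
    (T : X → X)
    (hnon : ∀ x ∈ K, ∀ y ∈ K, dist (T x) (T y) ≤ dist x y)
    (x : ℕ → X) (hxK : ∀ n, x n ∈ K) (C : ℝ) (hb : ∀ n, dist (x 0) (x n) ≤ C)
    (happrox : Filter.Tendsto (fun n => dist (x n) (T (x n)))
      Filter.atTop (nhds 0))
    (a : X)
    (ha : ∀ y : X,
      Filter.limsup (fun n => dist a (x n)) Filter.atTop ≤
        Filter.limsup (fun n => dist y (x n)) Filter.atTop) :
    T a = a := by
  have hx : Bornology.IsBounded (Set.range x) :=
    Metric.isBounded_closedBall.subset <|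
      Set.range_subset_iff.2 fun n => Metric.mem_closedBall'.2 (hb n)
  have haK : a ∈ K := IsAsymptoticCenter.mem_of_forall_mem hgeo hcat hx hcl hconv hxK ha
  refine IsAsymptoticCenter.eq_of_asymptoticRadius_le hgeo hcat hx ha <|
    asymptoticRadius_le_of_eventually_le hx fun ε hε => ?_
  filter_upwards [happrox.eventually (gt_mem_nhds hε)] with n hn
  calc dist (T a) (x n) ≤ dist (T a) (T (x n)) + dist (T (x n)) (x n) := dist_triangle _ _ _
    _ ≤ dist a (x n) + ε := by
      rw [dist_comm (T (x n))]
      linarith [hnon a haK (x n) (hxK n)]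

/-- In a complete CAT(0) space, the asymptotic center of a bounded approximate
fixed point sequence of a nonexpansive map `T : K → K` (K closed convex) is a
fixed point of `T`. -/
theorem asymptotic_center_fixed {X : Type*} [MetricSpace X] [CompleteSpace X]
    (hgeo : IsGeodesicSpace X) (hcat : IsCatZero X)
    (K : Set X) (hcl : IsClosed K) (hconv : MetricConvex K)
    (T : X → X) (hT : Set.MapsTo T K K)
    (hnon : ∀ x ∈ K, ∀ y ∈ K, dist (T x) (T y) ≤ dist x y)
    (x : ℕ → X) (hxK : ∀ n, x n ∈ K) (C : ℝ) (hb : ∀ n, dist (x 0) (x n) ≤ C)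
    (happrox : Filter.Tendsto (fun n => dist (x n) (T (x n)))
      Filter.atTop (nhds 0))
    (a : X)
    (ha : ∀ y : X,
      Filter.limsup (fun n => dist a (x n)) Filter.atTop ≤
        Filter.limsup (fun n => dist y (x n)) Filter.atTop) :
    T a = a :=
  asymptotic_center_fixed_general hgeo hcat K hcl hconv T hnon x hxK C hb happrox a ha
end

section
/- Let X be a complete R-tree and K ⊆ X a nonempty closed convex subset. Then every nonexpansive mapping T: K → K has a fixed point if and only if K is geodesically bounded. -/
/-- The metric segment between `x` and `y` (the set of points between them). -/
def metricSeg {X : Type*} [MetricSpace X] (x y : X) : Set X :=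
  {p | dist x p + dist p y = dist x y}

/-- An `ℝ`-tree: a geodesic metric space with unique metric segments in which
`[y,x] ∩ [x,z] = {x}` implies `[y,x] ∪ [x,z] = [y,z]`. -/
def IsRTree (X : Type*) [MetricSpace X] : Prop :=
  IsGeodesicSpace X ∧
  (∀ x y : X, ∀ t : ℝ, t ∈ Set.Icc 0 (dist x y) →
    ∃! p : X, p ∈ metricSeg x y ∧ dist x p = t) ∧
  (∀ x y z : X, metricSeg y x ∩ metricSeg x z = {x} →
    metricSeg y x ∪ metricSeg x z = metricSeg y z)

/-!
If `K` contains a geodesic ray `c`, then `y ↦ c (d(c 0, y) + 1)` is a nonexpansive self-map of `K`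
without fixed points.

Conversely, fix `x ∈ K` and order `C = {y ∈ K | y ∈ [x, T y]}` by `y ≼ y'` iff `y ∈ [x, y']`.
Along a chain, `d(x, ·)` is an isometry into `ℝ`: a bounded chain converges to an upper bound in the
closed set `C`, and an unbounded one sweeps out a geodesic ray in `K`. Zorn's lemma gives a maximal
`m ∈ C`. If `T m ≠ m`, a point `z ∈ [m, T m]` near `m` is again in `C` and above `m`, by the
four-point condition `(a|b)_p ≥ min ((a|c)_p, (b|c)_p)` of `ℝ`-trees.
-/

section

open Set Filter

variable {X : Type*} [MetricSpace X]

def HasUniqueSegments (X : Type*) [MetricSpace X] : Prop :=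
  ∀ x y : X, ∀ t ∈ Icc 0 (dist x y), ∃! p, p ∈ metricSeg x y ∧ dist x p = t

def HasFixedPointProperty (K : Set X) : Prop :=
  ∀ T : X → X, MapsTo T K K →
    (∀ x ∈ K, ∀ y ∈ K, dist (T x) (T y) ≤ dist x y) → ∃ z ∈ K, T z = z

theorem IsRTree.hasUniqueSegments (htree : IsRTree X) : HasUniqueSegments X := htree.2.1

namespace MetricBtw

variable {w x y z : X}

theorem self_left (x y : X) : MetricBtw x x y := by
  simp [MetricBtw]

theorem self_right (x y : X) : MetricBtw x y y := by
  simp [MetricBtw]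

instance (x : X) : Std.Refl (MetricBtw x) := ⟨MetricBtw.self_right x⟩

theorem symm (h : MetricBtw x y z) : MetricBtw z y x := by
  unfold MetricBtw at *
  linarith [dist_comm x y, dist_comm y z, dist_comm x z]

theorem dist_eq_sub (h : MetricBtw x y z) : dist y z = dist x z - dist x y := by
  unfold MetricBtw at h
  linarith

theorem dist_le (h : MetricBtw x y z) : dist x y ≤ dist x z := by
  linarith [h.dist_eq_sub, dist_nonneg (x := y) (y := z)]

theorem antisymm (h₁ : MetricBtw x y z) (h₂ : MetricBtw x z y) : y = z := by
  have := h₁.dist_eq_sub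
  have := h₂.dist_eq_sub
  rw [← dist_le_zero]
  linarith [dist_comm y z]

theorem trans_left (h₁ : MetricBtw w y z) (h₂ : MetricBtw w x y) : MetricBtw w x z := by
  unfold MetricBtw at *
  linarith [dist_triangle w x z, dist_triangle x y z]

theorem trans_right (h₁ : MetricBtw w x z) (h₂ : MetricBtw x y z) : MetricBtw w y z := by
  unfold MetricBtw at *
  linarith [dist_triangle w y z, dist_triangle w x y]

theorem trans_right_left (h₁ : MetricBtw w x z) (h₂ : MetricBtw x y z) : MetricBtw w x y := by
  unfold MetricBtw at *
  linarith [dist_triangle w x y, dist_triangle w y z]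

theorem dist_eq_abs_of_or (h : MetricBtw x y z ∨ MetricBtw x z y) :
    dist y z = |dist x y - dist x z| := by
  rcases h with h | h
  · rw [h.dist_eq_sub, abs_sub_comm, abs_of_nonneg (by linarith [h.dist_le])]
  · rw [dist_comm, h.dist_eq_sub, abs_of_nonneg (by linarith [h.dist_le])]

end MetricBtw

namespace HasUniqueSegments

variable (hu : HasUniqueSegments X) {x y p q : X}
include hu

theorem btw_of_dist_le (hp : MetricBtw x p y) (hq : MetricBtw x q y)
    (hle : dist x p ≤ dist x q) : MetricBtw x p q := by
  obtain ⟨v, ⟨hvq, hv⟩, -⟩ := hu x q (dist x p) ⟨dist_nonneg, hle⟩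
  have hvy : MetricBtw x v y := hq.trans_left hvq
  have hpv : p = v :=
    (hu x y (dist x p) ⟨dist_nonneg, hle.trans hq.dist_le⟩).unique ⟨hp, rfl⟩ ⟨hvy, hv⟩
  exact hpv ▸ hvq

end HasUniqueSegments

namespace IsChain

variable {x : X} {s : Set X}

theorem dist_eq_abs (hs : IsChain (MetricBtw x) s) {a b : X} (ha : a ∈ s) (hb : b ∈ s) :
    dist a b = |dist x a - dist x b| :=
  MetricBtw.dist_eq_abs_of_or (hs.total ha hb)

theorem exists_btw_upperBound [CompleteSpace X] (hs : IsChain (MetricBtw x) s)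
    (hne : s.Nonempty) (hbdd : BddAbove (dist x '' s)) :
    ∃ L ∈ closure s, ∀ a ∈ s, MetricBtw x a L := by
  obtain ⟨u, -, hu, hus⟩ := exists_seq_tendsto_sSup (hne.image (dist x)) hbdd
  choose a has hau using hus
  have hcauchy : CauchySeq a := by
    refine Metric.cauchySeq_iff.2 fun ε hε => ?_
    obtain ⟨N, hN⟩ := Metric.cauchySeq_iff.1 hu.cauchySeq ε hε
    refine ⟨N, fun m hm n hn => ?_⟩
    rw [hs.dist_eq_abs (has m) (has n), hau m, hau n, ← Real.dist_eq]
    exact hN m hm n hn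
  obtain ⟨L, hL⟩ := cauchySeq_tendsto_of_complete hcauchy
  refine ⟨L, mem_closure_of_tendsto hL (Eventually.of_forall has), fun b hb => ?_⟩
  have hxL : dist x L = sSup (dist x '' s) :=
    tendsto_nhds_unique ((tendsto_const_nhds.dist hL).congr hau) hu
  have hbL : dist b L = |dist x b - sSup (dist x '' s)| :=
    tendsto_nhds_unique
      ((tendsto_const_nhds.dist hL).congr fun n => by rw [hs.dist_eq_abs hb (has n), hau n])
      (tendsto_const_nhds.sub hu).abs
  have hxb : dist x b ≤ sSup (dist x '' s) := le_csSup hbdd (mem_image_of_mem _ hb)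
  rw [MetricBtw, hbL, hxL, abs_sub_comm, abs_of_nonneg (sub_nonneg.2 hxb)]
  ring

theorem exists_ray (hu : HasUniqueSegments X) (hs : IsChain (MetricBtw x) s)
    (hunb : ¬ BddAbove (dist x '' s)) :
    ∃ c : ℝ → X, (∀ t₁ t₂ : ℝ, 0 ≤ t₁ → 0 ≤ t₂ → dist (c t₁) (c t₂) = |t₁ - t₂|) ∧
      ∀ t, 0 ≤ t → ∃ a ∈ s, MetricBtw x (c t) a := by
  have hpt : ∀ t : ℝ, ∃ p, ∃ a ∈ s, MetricBtw x p a ∧ dist x p = |t| := by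
    intro t
    obtain ⟨_, ⟨a, ha, rfl⟩, hta⟩ := not_bddAbove_iff.1 hunb |t|
    obtain ⟨p, ⟨hpa, hp⟩, -⟩ := hu x a |t| ⟨abs_nonneg t, hta.le⟩
    exact ⟨p, a, ha, hpa, hp⟩
  choose c a has hca hc using hpt
  have hdist : ∀ t₁ t₂, 0 ≤ t₁ → t₁ ≤ t₂ → dist (c t₁) (c t₂) = t₂ - t₁ := by
    intro t₁ t₂ h₀ h
    have hc₁ : dist x (c t₁) = t₁ := (hc t₁).trans (abs_of_nonneg h₀)
    have hc₂ : dist x (c t₂) = t₂ := (hc t₂).trans (abs_of_nonneg (h₀.trans h))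
    have h₁ : MetricBtw x (c t₁) (a t₂) := by
      rcases hs.total (has t₁) (has t₂) with h' | h'
      · exact h'.trans_left (hca t₁)
      · exact hu.btw_of_dist_le (hca t₁) h' (by linarith [(hca t₂).dist_le])
    rw [(hu.btw_of_dist_le h₁ (hca t₂) (by linarith)).dist_eq_sub, hc₁, hc₂]
  refine ⟨c, fun t₁ t₂ h₁ h₂ => ?_, fun t _ => ⟨a t, has t, hca t⟩⟩
  rcases le_total t₁ t₂ with h | h
  · rw [hdist t₁ t₂ h₁ h, abs_of_nonpos (sub_nonpos.2 h), neg_sub]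
  · rw [dist_comm, hdist t₂ t₁ h₂ h, abs_of_nonneg (sub_nonneg.2 h)]

end IsChain

theorem HasUniqueSegments.exists_maximal_btw [CompleteSpace X] (hu : HasUniqueSegments X)
    {K C : Set X} (hconv : MetricConvex K) (hGB : GeodesicallyBounded K) (hC : IsClosed C)
    (hCK : C ⊆ K) {x : X} (hx : x ∈ C) : ∃ m ∈ C, ∀ y ∈ C, MetricBtw x m y → y = m := by
  have hbound : ∀ c : Set C, IsChain (fun u v : C => MetricBtw x u v) c →
      ∃ ub : C, ∀ a ∈ c, MetricBtw x a ub := by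
    intro c hc
    have hs : IsChain (MetricBtw x) (Subtype.val '' c) := by
      rintro _ ⟨a, ha, rfl⟩ _ ⟨b, hb, rfl⟩ hab
      exact hc ha hb (ne_of_apply_ne _ hab)
    rcases c.eq_empty_or_nonempty with rfl | hne
    · exact ⟨⟨x, hx⟩, by simp⟩
    by_cases hbdd : BddAbove (dist x '' (Subtype.val '' c))
    · obtain ⟨L, hL, hLub⟩ := hs.exists_btw_upperBound (hne.image _) hbdd
      refine ⟨⟨L, closure_minimal (image_subset_iff.2 fun a _ => a.2) hC hL⟩, fun a ha => ?_⟩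
      exact hLub a ⟨a, ha, rfl⟩
    · obtain ⟨ray, hray, hray_mem⟩ := hs.exists_ray hu hbdd
      refine absurd ⟨ray, hray, fun t ht => ?_⟩ hGB
      obtain ⟨_, ⟨a, -, rfl⟩, h⟩ := hray_mem t ht
      exact hconv x (hCK hx) a (hCK a.2) _ h
  obtain ⟨m, hm⟩ := exists_maximal_of_chains_bounded hbound fun h₁ h₂ => h₂.trans_left h₁
  exact ⟨m, m.2, fun y hy hmy => (hm ⟨y, hy⟩ hmy).antisymm hmy⟩

noncomputable def gromovProduct (p a b : X) : ℝ := (dist p a + dist p b - dist a b) / 2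

theorem gromovProduct_comm (p a b : X) : gromovProduct p a b = gromovProduct p b a := by
  rw [gromovProduct, gromovProduct, dist_comm a b, add_comm (dist p a)]

theorem gromovProduct_nonneg (p a b : X) : 0 ≤ gromovProduct p a b := by
  rw [gromovProduct]
  linarith [dist_triangle a p b, dist_comm a p]

theorem gromovProduct_eq_zero_iff {p a b : X} : gromovProduct p a b = 0 ↔ MetricBtw a p b := by
  rw [gromovProduct, MetricBtw, dist_comm a p]
  constructor <;> intro h <;> linarith

theorem gromovProduct_eq_dist_of_median {p a b w : X} (ha : MetricBtw p w a)
    (hb : MetricBtw p w b) (hab : MetricBtw a w b) : gromovProduct p a b = dist p w := by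
  unfold MetricBtw at *
  rw [gromovProduct]
  linarith [dist_comm a w]

theorem HasUniqueSegments.exists_farthest_common_point (hu : HasUniqueSegments X) (p a b : X) :
    ∃ w, MetricBtw p w a ∧ MetricBtw p w b ∧
      ∀ v, MetricBtw p v a → MetricBtw p v b → dist p v ≤ dist p w := by
  set D := dist p '' {v | MetricBtw p v a ∧ MetricBtw p v b}
  have hD₀ : 0 ∈ D := ⟨p, ⟨.self_left p a, .self_left p b⟩, dist_self p⟩
  have hD_le : ∀ d ∈ D, d ≤ dist p a := by
    rintro _ ⟨v, ⟨hva, -⟩, rfl⟩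
    exact hva.dist_le
  have hbdd : BddAbove D := ⟨dist p a, hD_le⟩
  obtain ⟨w, ⟨hwa, hw⟩, -⟩ :=
    hu p a (sSup D) ⟨le_csSup hbdd hD₀, csSup_le ⟨0, hD₀⟩ hD_le⟩
  have hmax : ∀ v, MetricBtw p v a → MetricBtw p v b → dist p v ≤ dist p w := fun v hva hvb => by
    rw [hw]
    exact le_csSup hbdd ⟨v, ⟨hva, hvb⟩, rfl⟩
  -- points of `[p, a] ∩ [p, b]` approach `w` along `[p, a]`, and `[p, b]` is closed
  have hwb : MetricBtw p w b := by
    refine le_antisymm (le_of_forall_pos_lt_add fun ε hε => ?_) (dist_triangle p w b)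
    obtain ⟨_, ⟨v, ⟨hva, hvb⟩, rfl⟩, hv⟩ :=
      exists_lt_of_lt_csSup ⟨0, hD₀⟩ (by linarith : sSup D - ε / 2 < sSup D)
    have hvw := (hu.btw_of_dist_le hva hwa (hmax v hva hvb)).dist_eq_sub
    linarith [hvb.dist_eq_sub, dist_triangle w v b, dist_comm v w]
  exact ⟨w, hwa, hwb, hmax⟩

namespace IsRTree

variable (htree : IsRTree X)
include htree

theorem exists_median (p a b : X) :
    ∃ w, MetricBtw p w a ∧ MetricBtw p w b ∧ MetricBtw a w b := by
  obtain ⟨w, hwa, hwb, hmax⟩ := htree.hasUniqueSegments.exists_farthest_common_point p a b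
  have hinter : metricSeg a w ∩ metricSeg w b = {w} := by
    refine eq_singleton_iff_unique_mem.2 ⟨⟨MetricBtw.self_right a w, MetricBtw.self_left w b⟩, ?_⟩
    rintro v ⟨hav, hvb⟩
    have hwva : MetricBtw w v a := MetricBtw.symm hav
    have hwv := (hwa.trans_right_left hwva).dist_eq_sub
    have := hmax v (hwa.trans_right hwva) (hwb.trans_right hvb)
    rw [← dist_le_zero]
    linarith [dist_comm v w]
  have hw : w ∈ metricSeg a b := htree.2.2 w a b hinter ▸ Or.inl (MetricBtw.self_right a w)
  exact ⟨w, hwa, hwb, hw⟩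

theorem min_gromovProduct_le (p a b c : X) :
    min (gromovProduct p a c) (gromovProduct p b c) ≤ gromovProduct p a b := by
  wlog h : gromovProduct p a c ≤ gromovProduct p b c generalizing a b
  · rw [min_comm, gromovProduct_comm p a b]
    exact this b a (le_of_not_ge h)
  rw [min_eq_left h]
  obtain ⟨w₁, h₁a, h₁c, h₁ac⟩ := htree.exists_median p a c
  obtain ⟨w₂, h₂b, h₂c, h₂bc⟩ := htree.exists_median p b c
  have e₁ := gromovProduct_eq_dist_of_median h₁a h₁c h₁ac
  have e₂ := gromovProduct_eq_dist_of_median h₂b h₂c h₂bc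
  have h₁₂ : MetricBtw p w₁ w₂ := htree.hasUniqueSegments.btw_of_dist_le h₁c h₂c (by linarith)
  have h₁b : MetricBtw p w₁ b := h₂b.trans_left h₁₂
  rw [e₁, gromovProduct]
  linarith [h₁a.dist_eq_sub, h₁b.dist_eq_sub, dist_triangle a w₁ b, dist_comm a w₁]

theorem btw_of_btw_of_gromovProduct_pos {a b c z : X} (h : MetricBtw a z b)
    (hc : 0 < gromovProduct z a c) : MetricBtw c z b := by
  have hmin := htree.min_gromovProduct_le z a b c
  rw [gromovProduct_eq_zero_iff.2 h, min_le_iff] at hmin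
  have hbc : gromovProduct z b c = 0 :=
    le_antisymm (hmin.resolve_left hc.not_ge) (gromovProduct_nonneg z b c)
  exact (gromovProduct_eq_zero_iff.1 hbc).symm

theorem exists_btw_image_beyond {K : Set X} (hconv : MetricConvex K) {T : X → X}
    (hmaps : MapsTo T K K) (hnon : ∀ x ∈ K, ∀ y ∈ K, dist (T x) (T y) ≤ dist x y)
    {x m : X} (hm : m ∈ K) (hmT : MetricBtw x m (T m)) (hTm : T m ≠ m) :
    ∃ z ∈ K, MetricBtw x z (T z) ∧ MetricBtw x m z ∧ z ≠ m := by
  obtain ⟨z, hz, hmzT⟩ := htree.1 m (T m) (1 / 4) ⟨by norm_num, by norm_num⟩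
  have hzK : z ∈ K := hconv m hm (T m) (hmaps hm) z hmzT
  have hD : 0 < dist m (T m) := dist_pos.2 hTm.symm
  -- `d(Tz, Tm) ≤ d(z, m) < d(z, Tm)`, so `Tz` lies on the same side of `z` as `Tm`
  have hTmTz : 0 < gromovProduct z (T m) (T z) := by
    rw [gromovProduct]
    linarith [hnon z hzK m hm, hmzT.dist_eq_sub, dist_nonneg (x := z) (y := T z),
      dist_comm z m, dist_comm (T m) (T z)]
  have hmzTz : MetricBtw m z (T z) :=
    (htree.btw_of_btw_of_gromovProduct_pos hmzT.symm hTmTz).symm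
  have hxmz : MetricBtw x m z := hmT.trans_right_left hmzT
  have hzm : 0 < dist z m := by
    rw [dist_comm, hz]
    positivity
  have hmx : 0 < gromovProduct z m x := by
    rw [gromovProduct]
    linarith [hxmz.dist_eq_sub, dist_comm z m, dist_comm z x, dist_comm m x]
  exact ⟨z, hzK, htree.btw_of_btw_of_gromovProduct_pos hmzTz hmx, hxmz, dist_pos.1 hzm⟩

theorem hasFixedPointProperty [CompleteSpace X] {K : Set X} (hne : K.Nonempty)
    (hcl : IsClosed K) (hconv : MetricConvex K) (hGB : GeodesicallyBounded K) :
    HasFixedPointProperty K := by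
  intro T hmaps hnon
  obtain ⟨x, hx⟩ := hne
  have hT : ContinuousOn T K := (LipschitzOnWith.mk_one hnon).continuousOn
  have hC : IsClosed {y ∈ K | MetricBtw x y (T y)} := hcl.isClosed_eq (by fun_prop) (by fun_prop)
  obtain ⟨m, ⟨hmK, hmT⟩, hmax⟩ := htree.hasUniqueSegments.exists_maximal_btw hconv hGB hC
    (fun y hy => hy.1) ⟨hx, MetricBtw.self_left x (T x)⟩
  by_contra! hfix
  obtain ⟨z, hzK, hzT, hmz, hzm⟩ :=
    htree.exists_btw_image_beyond hconv hmaps hnon hmK hmT (hfix m hmK)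
  exact hzm (hmax z ⟨hzK, hzT⟩ hmz)

end IsRTree

theorem GeodesicallyBounded.of_hasFixedPointProperty {K : Set X} (h : HasFixedPointProperty K) :
    GeodesicallyBounded K := by
  rintro ⟨c, hc, hcK⟩
  obtain ⟨z, -, hz⟩ := h (fun y => c (dist (c 0) y + 1)) (fun y _ => hcK _ (by positivity))
    fun y _ w _ => by
      rw [hc _ _ (by positivity) (by positivity), add_sub_add_right_eq_sub, dist_comm (c 0) y,
        dist_comm (c 0) w]
      exact abs_dist_sub_le y w (c 0)
  have hcz := hc 0 (dist (c 0) z + 1) le_rfl (by positivity)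
  rw [hz, zero_sub, abs_neg, abs_of_pos (by positivity)] at hcz
  linarith

end

/-- A nonempty closed convex subset `K` of a complete `ℝ`-tree has the fixed point
property for nonexpansive mappings `T : K → K` if and only if `K` is geodesically
bounded. -/
theorem rtree_fpp_iff_geodesically_bounded {X : Type*} [MetricSpace X]
    [CompleteSpace X] (htree : IsRTree X)
    (K : Set X) (hne : K.Nonempty) (hcl : IsClosed K) (hconv : MetricConvex K) :
    (∀ T : X → X, Set.MapsTo T K K →
      (∀ x ∈ K, ∀ y ∈ K, dist (T x) (T y) ≤ dist x y) → ∃ z ∈ K, T z = z) ↔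
    GeodesicallyBounded K :=
  ⟨GeodesicallyBounded.of_hasFixedPointProperty, htree.hasFixedPointProperty hne hcl hconv⟩
end
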